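/- arXiv:1712.03033 — 2 statements merged into one kernel-verified Lean document; each statement's English description precedes it below -/
import Mathlib

section
/- Let G be a cubic graph. Then every vertex x of G satisfies the Bakry-Émery curvature-dimension inequality CD(0,∞) if and only if every edge xy of G has Ollivier-Ricci curvature κ₀(x,y) ≥ 0. -/
open Finset

variable {V : Type*}

/-- The non-normalized graph Laplacian: `Δ f (x) = ∑_{y ∼ x} (f y − f x)`. -/
noncomputable def graphLap (G : SimpleGraph V) [∀ v, Fintype (G.neighborSet v)]
    (f : V → ℝ) (x : V) : ℝ :=
  ∑ y ∈ G.neighborFinset x, (f y - f x)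

/-- The Bakry–Émery operator `Γ`: `2Γ(f,g) = Δ(fg) − fΔg − gΔf`. -/
noncomputable def graphGamma (G : SimpleGraph V) [∀ v, Fintype (G.neighborSet v)]
    (f g : V → ℝ) (x : V) : ℝ :=
  (graphLap G (fun z => f z * g z) x - f x * graphLap G g x - g x * graphLap G f x) / 2

/-- The Bakry–Émery operator `Γ₂`: `2Γ₂(f,g) = ΔΓ(f,g) − Γ(f,Δg) − Γ(Δf,g)`. -/
noncomputable def graphGamma2 (G : SimpleGraph V) [∀ v, Fintype (G.neighborSet v)]
    (f g : V → ℝ) (x : V) : ℝ :=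
  (graphLap G (graphGamma G f g) x - graphGamma G f (graphLap G g) x -
    graphGamma G (graphLap G f) g x) / 2

/-- A vertex `x` satisfies the curvature-dimension inequality `CD(0,∞)` if
`Γ₂(f)(x) ≥ 0` for all `f : V → ℝ`. -/
def SatisfiesCD (G : SimpleGraph V) [∀ v, Fintype (G.neighborSet v)] (x : V) : Prop :=
  ∀ f : V → ℝ, 0 ≤ graphGamma2 G f f x

open Classical in
/-- The idleness-0 probability measure `μ_x^0` at a vertex `x`. -/
noncomputable def muZero (G : SimpleGraph V) [∀ v, Fintype (G.neighborSet v)] (x : V) :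
    V → ℝ :=
  fun z => if G.Adj x z then 1 / (G.degree x : ℝ) else 0

/-- The Wasserstein distance `W₁(μ_x^0, μ_y^0)`: the infimum of the transport cost over
all couplings of `μ_x^0` and `μ_y^0`. -/
noncomputable def Wone (G : SimpleGraph V) [∀ v, Fintype (G.neighborSet v)] (x y : V) : ℝ :=
  sInf {w : ℝ | ∃ π : V → V → ℝ,
    (∀ u v, 0 ≤ π u v) ∧
    (∀ u v, π u v ≠ 0 → G.Adj x u ∧ G.Adj y v) ∧
    (∀ u, ∑ v ∈ G.neighborFinset y, π u v = muZero G x u) ∧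
    (∀ v, ∑ u ∈ G.neighborFinset x, π u v = muZero G y v) ∧
    w = ∑ u ∈ G.neighborFinset x, ∑ v ∈ G.neighborFinset y, (G.dist u v : ℝ) * π u v}

/-- The Ollivier–Ricci curvature with idleness `0`: `κ₀(x,y) = 1 − W₁(μ_x^0, μ_y^0)`. -/
noncomputable def kappaZero (G : SimpleGraph V) [∀ v, Fintype (G.neighborSet v)]
    (x y : V) : ℝ :=
  1 - Wone G x y

/-- The prism graph `Y n` on vertices `ZMod n × Bool`: two `n`-cycles joined by rungs;
equivalently the Cartesian product of the cycle `C_n` with `K₂`. -/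
def prismGraph (n : ℕ) : SimpleGraph (ZMod n × Bool) :=
  SimpleGraph.fromRel (fun p q => (p.2 = q.2 ∧ q.1 = p.1 + 1) ∨ (p.1 = q.1 ∧ p.2 ≠ q.2))

/-- The Möbius ladder `M n` on vertices `ZMod (2n)`: the cycle `C_{2n}` together with
all antipodal edges. -/
def mobiusLadder (n : ℕ) : SimpleGraph (ZMod (2 * n)) :=
  SimpleGraph.fromRel (fun p q => q = p + 1 ∨ q = p + (n : ZMod (2 * n)))

open Classical in
/-- The Laplacian matrix `L = D − A` of a finite graph. -/
noncomputable def lapMat (G : SimpleGraph V) [Fintype V] : Matrix V V ℝ :=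
  fun i j =>
    (if i = j then ∑ k : V, (if G.Adj i k then (1 : ℝ) else 0) else 0) -
      (if G.Adj i j then 1 else 0)

/-- `λ₁ G` : the smallest non-zero eigenvalue of the Laplacian matrix of `G`. -/
noncomputable def lambdaOne (G : SimpleGraph V) [Fintype V] : ℝ :=
  sInf {t : ℝ | t ≠ 0 ∧ ∃ v : V → ℝ, v ≠ 0 ∧ (lapMat G).mulVec v = t • v}

noncomputable instance fintypeNeighborSetOfFinite [Finite V] (G : SimpleGraph V) (v : V) :
    Fintype (G.neighborSet v) := Fintype.ofFinite _

/-!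
For a cubic graph both conditions are equivalent to the local condition that every edge `xy`
lies on a triangle or a square.

Ollivier side: if `a ∼ x`, `b ∼ y` with `a ≠ y`, `b ≠ x` and `d(a, b) ≤ 1`, the transport plan
`a ↦ b`, `y ↦` the third neighbour of `y`, and the third neighbour of `x` `↦ x` costs at most `1`.
Otherwise the potential `2 − [u = y] − [v = x]` is a dual certificate for
`W₁ ≥ 2 − 1/d_x − 1/d_y = 4/3`.

Bakry–Émery side: `Γ₂(f)(x)` is an explicit quadratic form in the values of `f` on the 2-ball
around `x`. If an edge `xy` fails the condition, the test function equal to `0` at `x`, `-4` at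
`y`, `-6` at the other neighbours of `y` and `2` elsewhere gives `Γ₂(f)(x) = -6`. Otherwise some
neighbour of `x` lies on a triangle or square with each of the other two, and each of the
resulting configurations turns the form into a sum of squares.
-/

open SimpleGraph

theorem Finset.exists_eq_triple_of_mem_of_mem {α : Type*} [DecidableEq α] {s : Finset α}
    {a b : α} (hs : s.card = 3) (ha : a ∈ s) (hb : b ∈ s) (hab : a ≠ b) :
    ∃ c, s = {a, b, c} := by
  have hb' : b ∈ s.erase a := mem_erase.2 ⟨hab.symm, hb⟩
  have : ((s.erase a).erase b).card = 1 := by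
    rw [card_erase_of_mem hb', card_erase_of_mem ha, hs]
  obtain ⟨c, hc⟩ := card_eq_one.1 this
  exact ⟨c, by rw [← hc, insert_erase hb', insert_erase ha]⟩

theorem Finset.ne_of_card_triple_eq_three {α : Type*} [DecidableEq α] {a b c : α}
    (h : ({a, b, c} : Finset α).card = 3) : a ≠ b ∧ a ≠ c ∧ b ≠ c := by
  refine ⟨?_, ?_, ?_⟩ <;> rintro rfl <;>
    simp only [mem_insert, mem_singleton, true_or, or_true, insert_eq_of_mem] at h <;>
    exact (card_le_two.trans_lt (by norm_num : 2 < 3)).ne h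

theorem Set.exists_bijOn_triple {α β : Type*} [DecidableEq α] {a b c : α} {a' b' c' : β}
    (hab : a ≠ b) (hac : a ≠ c) (hbc : b ≠ c) (hab' : a' ≠ b') (hac' : a' ≠ c')
    (hbc' : b' ≠ c') :
    ∃ σ : α → β, BijOn σ {a, b, c} {a', b', c'} ∧ σ a = a' ∧ σ b = b' ∧ σ c = c' := by
  set σ : α → β := fun u => if u = a then a' else if u = b then b' else c'
  have hσa : σ a = a' := if_pos rfl
  have hσb : σ b = b' := by simp [σ, hab.symm]
  have hσc : σ c = c' := by simp [σ, hac.symm, hbc.symm]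
  refine ⟨σ, ⟨?_, ?_, ?_⟩, hσa, hσb, hσc⟩
  · rintro u (rfl | rfl | rfl) <;> simp [hσa, hσb, hσc]
  · rintro u (rfl | rfl | rfl) v (rfl | rfl | rfl) huv <;> simp_all
  · rintro v (rfl | rfl | rfl)
    exacts [⟨a, by simp, hσa⟩, ⟨b, by simp, hσb⟩, ⟨c, by simp, hσc⟩]

namespace SimpleGraph

variable {G : SimpleGraph V} [∀ v, Fintype (G.neighborSet v)] {v a b c : V}

theorem adj_of_neighborFinset_eq_triple [DecidableEq V] (hN : G.neighborFinset v = {a, b, c}) :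
    G.Adj v a ∧ G.Adj v b ∧ G.Adj v c := by
  simp [← mem_neighborFinset, hN]

theorem IsRegularOfDegree.card_neighborFinset (hG : G.IsRegularOfDegree 3) (v : V) :
    (G.neighborFinset v).card = 3 := by
  rw [card_neighborFinset_eq_degree, hG v]

variable [DecidableEq V]

theorem IsRegularOfDegree.ne_of_neighborFinset_eq (hG : G.IsRegularOfDegree 3)
    (hN : G.neighborFinset v = {a, b, c}) : a ≠ b ∧ a ≠ c ∧ b ≠ c :=
  Finset.ne_of_card_triple_eq_three (hN ▸ hG.card_neighborFinset v)

theorem IsRegularOfDegree.exists_neighborFinset_eq_of_adj_of_adj (hG : G.IsRegularOfDegree 3)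
    (ha : G.Adj v a) (hb : G.Adj v b) (hab : a ≠ b) : ∃ c, G.neighborFinset v = {a, b, c} :=
  Finset.exists_eq_triple_of_mem_of_mem (hG.card_neighborFinset v)
    ((G.mem_neighborFinset _ _).2 ha) ((G.mem_neighborFinset _ _).2 hb) hab

theorem IsRegularOfDegree.exists_neighborFinset_eq_of_adj (hG : G.IsRegularOfDegree 3)
    (ha : G.Adj v a) : ∃ b c, G.neighborFinset v = {a, b, c} := by
  obtain ⟨b, hb, hba⟩ := Finset.exists_mem_ne (by rw [hG.card_neighborFinset v]; norm_num) a
  obtain ⟨c, hc⟩ := hG.exists_neighborFinset_eq_of_adj_of_adj ha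
    ((G.mem_neighborFinset _ _).1 hb) hba.symm
  exact ⟨b, c, hc⟩

theorem IsRegularOfDegree.neighborFinset_eq (hG : G.IsRegularOfDegree 3) (ha : G.Adj v a)
    (hb : G.Adj v b) (hc : G.Adj v c) (hab : a ≠ b) (hac : a ≠ c) (hbc : b ≠ c) :
    G.neighborFinset v = {a, b, c} := by
  refine (eq_of_subset_of_card_le ?_ ?_).symm
  · simp [insert_subset_iff, ha, hb, hc]
  · rw [hG.card_neighborFinset v, card_eq_three.2 ⟨a, b, c, hab, hac, hbc, rfl⟩]

end SimpleGraph

def OnTriangleOrSquare (G : SimpleGraph V) (x y : V) : Prop :=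
  ∃ a b, G.Adj x a ∧ a ≠ y ∧ G.Adj y b ∧ b ≠ x ∧ (a = b ∨ G.Adj a b)

/-- The path `u – x – w` lies on a triangle or on a square. -/
def TriangleOrSquareThrough (G : SimpleGraph V) (x u w : V) : Prop :=
  G.Adj u w ∨ ∃ z, z ≠ x ∧ G.Adj u z ∧ G.Adj w z

theorem TriangleOrSquareThrough.symm {G : SimpleGraph V} {x u w : V}
    (h : TriangleOrSquareThrough G x u w) : TriangleOrSquareThrough G x w u := by
  rcases h with h | ⟨z, hzx, huz, hwz⟩
  · exact Or.inl h.symm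
  · exact Or.inr ⟨z, hzx, hwz, huz⟩

theorem OnTriangleOrSquare.triangleOrSquareThrough [DecidableEq V] {G : SimpleGraph V}
    [∀ v, Fintype (G.neighborSet v)] {x y u w : V} (hN : G.neighborFinset x = {y, u, w})
    (h : OnTriangleOrSquare G x y) :
    TriangleOrSquareThrough G x y u ∨ TriangleOrSquareThrough G x y w := by
  obtain ⟨a, b, hxa, hay, hyb, hbx, hab⟩ := h
  have hya : TriangleOrSquareThrough G x y a := by
    rcases hab with rfl | hab
    · exact Or.inl hyb
    · exact Or.inr ⟨b, hbx, hyb, hab⟩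
  have ha : a ∈ ({y, u, w} : Finset V) := hN ▸ (G.mem_neighborFinset _ _).2 hxa
  simp only [mem_insert, mem_singleton] at ha
  rcases ha with rfl | rfl | rfl
  · exact absurd rfl hay
  · exact Or.inl hya
  · exact Or.inr hya

section Wasserstein

variable {G : SimpleGraph V} [∀ v, Fintype (G.neighborSet v)] {x y : V}

theorem muZero_of_adj {u : V} (h : G.Adj x u) : muZero G x u = (G.degree x : ℝ)⁻¹ := by
  simp [muZero, h]

theorem muZero_of_not_adj {u : V} (h : ¬ G.Adj x u) : muZero G x u = 0 := by
  simp [muZero, h]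

theorem muZero_nonneg (x u : V) : 0 ≤ muZero G x u := by
  unfold muZero; split_ifs <;> positivity

theorem sum_muZero (hx : G.degree x ≠ 0) : ∑ u ∈ G.neighborFinset x, muZero G x u = 1 := by
  rw [sum_congr rfl fun u hu => muZero_of_adj ((G.mem_neighborFinset x u).1 hu), sum_const,
    G.card_neighborFinset_eq_degree, nsmul_eq_mul]
  field_simp

theorem Wone_le_of_coupling (π : V → V → ℝ) (hπ : ∀ u v, 0 ≤ π u v)
    (hsupp : ∀ u v, π u v ≠ 0 → G.Adj x u ∧ G.Adj y v)
    (hrow : ∀ u, ∑ v ∈ G.neighborFinset y, π u v = muZero G x u)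
    (hcol : ∀ v, ∑ u ∈ G.neighborFinset x, π u v = muZero G y v) :
    Wone G x y ≤ ∑ u ∈ G.neighborFinset x, ∑ v ∈ G.neighborFinset y, (G.dist u v : ℝ) * π u v :=
  csInf_le ⟨0, by
    rintro w ⟨π, hπ, -, -, -, rfl⟩
    exact sum_nonneg fun u _ => sum_nonneg fun v _ => mul_nonneg (Nat.cast_nonneg _) (hπ u v)⟩
    ⟨π, hπ, hsupp, hrow, hcol, rfl⟩

/-- Weak Kantorovich duality. -/
theorem le_Wone_of_potential (hxy : G.Adj x y) (α β : V → ℝ)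
    (hαβ : ∀ u ∈ G.neighborFinset x, ∀ v ∈ G.neighborFinset y, α u + β v ≤ G.dist u v) :
    ∑ u ∈ G.neighborFinset x, α u * muZero G x u +
      ∑ v ∈ G.neighborFinset y, β v * muZero G y v ≤ Wone G x y := by
  have hx : G.degree x ≠ 0 := ((G.degree_pos_iff_exists_adj x).2 ⟨y, hxy⟩).ne'
  have hy : G.degree y ≠ 0 := ((G.degree_pos_iff_exists_adj y).2 ⟨x, hxy.symm⟩).ne'
  have hprod (u v : V) (h : muZero G x u * muZero G y v ≠ 0) : G.Adj x u ∧ G.Adj y v := by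
    by_contra hadj
    rcases not_and_or.1 hadj with hu | hv
    · exact h (by rw [muZero_of_not_adj hu, zero_mul])
    · exact h (by rw [muZero_of_not_adj hv, mul_zero])
  refine le_csInf ⟨_, fun u v => muZero G x u * muZero G y v,
    fun u v => mul_nonneg (muZero_nonneg x u) (muZero_nonneg y v), hprod,
    fun u => by rw [← mul_sum, sum_muZero hy, mul_one],
    fun v => by rw [← sum_mul, sum_muZero hx, one_mul], rfl⟩ ?_
  rintro w ⟨π, hπ, -, hrow, hcol, rfl⟩
  calc ∑ u ∈ G.neighborFinset x, α u * muZero G x u +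
        ∑ v ∈ G.neighborFinset y, β v * muZero G y v
      = ∑ u ∈ G.neighborFinset x, ∑ v ∈ G.neighborFinset y, (α u + β v) * π u v := by
        simp only [← hrow, ← hcol, mul_sum, add_mul, sum_add_distrib]
        rw [sum_comm (s := G.neighborFinset y)]
    _ ≤ _ := sum_le_sum fun u hu => sum_le_sum fun v hv =>
        mul_le_mul_of_nonneg_right (hαβ u hu v hv) (hπ u v)

theorem Wone_le_of_bijOn (σ : V → V) (hσ : Set.BijOn σ (G.neighborSet x) (G.neighborSet y)) :
    Wone G x y ≤ (∑ u ∈ G.neighborFinset x, (G.dist u (σ u) : ℝ)) / G.degree x := by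
  classical
  have hdeg : G.degree x = G.degree y := by
    rw [← G.card_neighborSet_eq_degree, ← G.card_neighborSet_eq_degree]
    exact Fintype.card_congr (hσ.equiv σ)
  have hmem {u} (hu : G.Adj x u) : σ u ∈ G.neighborFinset y :=
    (G.mem_neighborFinset _ _).2 (hσ.mapsTo hu)
  refine (Wone_le_of_coupling (fun u v => if σ u = v then muZero G x u else 0)
    (fun u v => by split_ifs <;> simp [muZero_nonneg]) (fun u v h => ?_) (fun u => ?_)
    (fun v => ?_)).trans_eq ?_
  · split_ifs at h with hv
    · have hu : G.Adj x u := by_contra fun hu => h (muZero_of_not_adj hu)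
      exact ⟨hu, hv ▸ hσ.mapsTo hu⟩
    · exact absurd rfl h
  · rw [sum_ite_eq]
    by_cases hu : G.Adj x u
    · rw [if_pos (hmem hu)]
    · rw [muZero_of_not_adj hu, ite_self]
  · by_cases hv : G.Adj y v
    · obtain ⟨u₀, hu₀, rfl⟩ := hσ.surjOn hv
      rw [sum_eq_single_of_mem u₀ ((G.mem_neighborFinset _ _).2 hu₀), if_pos rfl,
        muZero_of_adj hu₀, muZero_of_adj hv, hdeg]
      intro u hu hne
      exact if_neg fun h => hne (hσ.injOn ((G.mem_neighborFinset _ _).1 hu) hu₀ h)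
    · rw [muZero_of_not_adj hv]
      refine sum_eq_zero fun u hu => if_neg ?_
      rintro rfl
      exact hv (hσ.mapsTo ((G.mem_neighborFinset _ _).1 hu))
  · simp only [mul_ite, mul_zero, sum_ite_eq, div_eq_mul_inv, sum_mul]
    refine sum_congr rfl fun u hu => ?_
    have hu := (G.mem_neighborFinset _ _).1 hu
    rw [if_pos (hmem hu), muZero_of_adj hu]

end Wasserstein

section Ollivier

variable {G : SimpleGraph V} [∀ v, Fintype (G.neighborSet v)] {x y : V}

theorem two_sub_le_Wone_of_not_onTriangleOrSquare (hxy : G.Adj x y)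
    (h : ¬ OnTriangleOrSquare G x y) :
    2 - (G.degree x : ℝ)⁻¹ - (G.degree y : ℝ)⁻¹ ≤ Wone G x y := by
  classical
  have hx : G.degree x ≠ 0 := ((G.degree_pos_iff_exists_adj x).2 ⟨y, hxy⟩).ne'
  refine le_trans (le_of_eq ?_) (le_Wone_of_potential hxy (fun u => 2 - if u = y then 1 else 0)
    (fun v => -if v = x then 1 else 0) ?_)
  · simp only [sub_mul, neg_mul, sum_sub_distrib, sum_neg_distrib, ← mul_sum, sum_muZero hx,
      ite_mul, one_mul, zero_mul, sum_ite_eq', (G.mem_neighborFinset _ _).2 hxy,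
      (G.mem_neighborFinset _ _).2 hxy.symm, if_true, muZero_of_adj hxy, muZero_of_adj hxy.symm]
    ring
  intro u hu v hv
  rw [mem_neighborFinset] at hu hv
  by_cases huy : u = y
  · subst huy
    have : (G.dist u v : ℝ) = 1 := by exact_mod_cast dist_eq_one_iff_adj.2 hv
    rw [if_pos rfl]
    split_ifs <;> linarith
  by_cases hvx : v = x
  · subst hvx
    have : (G.dist u v : ℝ) = 1 := by exact_mod_cast dist_eq_one_iff_adj.2 hu.symm
    rw [if_neg huy, if_pos rfl]
    linarith
  have hne : u ≠ v := fun huv => h ⟨u, v, hu, huy, hv, hvx, Or.inl huv⟩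
  have hnadj : ¬ G.Adj u v := fun huv => h ⟨u, v, hu, huy, hv, hvx, Or.inr huv⟩
  have hreach : G.Reachable u v := hu.symm.reachable.trans (hxy.reachable.trans hv.reachable)
  have : (2 : ℝ) ≤ G.dist u v := by exact_mod_cast hreach.one_lt_dist_of_ne_of_not_adj hne hnadj
  rw [if_neg huy, if_neg hvx]
  linarith

theorem Wone_le_one_of_onTriangleOrSquare (hG : G.IsRegularOfDegree 3) (hxy : G.Adj x y)
    (h : OnTriangleOrSquare G x y) : Wone G x y ≤ 1 := by
  classical
  obtain ⟨a, b, hxa, hay, hyb, hbx, hab⟩ := h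
  obtain ⟨c, hNx⟩ := hG.exists_neighborFinset_eq_of_adj_of_adj hxy hxa hay.symm
  obtain ⟨d, hNy⟩ := hG.exists_neighborFinset_eq_of_adj_of_adj hxy.symm hyb hbx.symm
  obtain ⟨-, hyc, hac⟩ := hG.ne_of_neighborFinset_eq hNx
  obtain ⟨-, hxd, hbd⟩ := hG.ne_of_neighborFinset_eq hNy
  obtain ⟨-, -, hxc⟩ := adj_of_neighborFinset_eq_triple hNx
  obtain ⟨-, -, hyd⟩ := adj_of_neighborFinset_eq_triple hNy
  have hNy' : G.neighborFinset y = {d, b, x} := by rw [hNy, insert_comm, pair_comm, insert_comm]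
  obtain ⟨σ, hσ, hσy, hσa, hσc⟩ :=
    Set.exists_bijOn_triple hay.symm hyc hac hbd.symm hxd.symm hbx
  replace hσ : Set.BijOn σ (G.neighborSet x) (G.neighborSet y) := by
    rwa [← coe_neighborFinset, ← coe_neighborFinset, hNx, hNy', coe_insert, coe_pair,
      coe_insert, coe_pair]
  have hdab : (G.dist a b : ℝ) ≤ 1 := by
    rcases hab with rfl | hab
    · simp
    · rw [dist_eq_one_iff_adj.2 hab]; norm_num
  have hdyd : (G.dist y d : ℝ) = 1 := by exact_mod_cast dist_eq_one_iff_adj.2 hyd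
  have hdcx : (G.dist c x : ℝ) = 1 := by exact_mod_cast dist_eq_one_iff_adj.2 hxc.symm
  calc Wone G x y ≤ (∑ u ∈ G.neighborFinset x, (G.dist u (σ u) : ℝ)) / G.degree x :=
        Wone_le_of_bijOn σ hσ
    _ = (G.dist y d + G.dist a b + G.dist c x) / 3 := by
        rw [hNx, sum_insert (by simp [hay.symm, hyc]), sum_insert (by simp [hac]), sum_singleton,
          hσy, hσa, hσc, hG x]
        push_cast; ring
    _ ≤ 1 := by rw [hdyd, hdcx]; linarith

theorem kappaZero_nonneg_iff (hG : G.IsRegularOfDegree 3) (hxy : G.Adj x y) :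
    0 ≤ kappaZero G x y ↔ OnTriangleOrSquare G x y := by
  refine ⟨fun hκ => ?_, fun h => sub_nonneg.2 (Wone_le_one_of_onTriangleOrSquare hG hxy h)⟩
  by_contra h
  have hW := two_sub_le_Wone_of_not_onTriangleOrSquare hxy h
  rw [hG x, hG y] at hW
  rw [kappaZero] at hκ
  norm_num at hW
  linarith

end Ollivier

/-- `Γ₂(f)(x)` at a vertex `x` of a cubic graph, in terms of the values `v₀` of `f` at `x`,
`vᵢ` at its neighbours `yᵢ`, and `aᵢ, bᵢ` at the two further neighbours of `yᵢ`. -/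
noncomputable def cubicGamma2Form (v₀ v₁ v₂ v₃ a₁ b₁ a₂ b₂ a₃ b₃ : ℝ) : ℝ :=
  9/2 * v₀ ^ 2 - 4 * v₀ * (v₁ + v₂ + v₃) + 1/2 * v₀ * (a₁ + b₁ + a₂ + b₂ + a₃ + b₃)
  + 2 * (v₁ ^ 2 + v₂ ^ 2 + v₃ ^ 2) + (v₁ * v₂ + v₁ * v₃ + v₂ * v₃)
  - v₁ * (a₁ + b₁) - v₂ * (a₂ + b₂) - v₃ * (a₃ + b₃)
  + 1/4 * (a₁ ^ 2 + b₁ ^ 2 + a₂ ^ 2 + b₂ ^ 2 + a₃ ^ 2 + b₃ ^ 2)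

/- The form is indefinite; it becomes positive semidefinite once the variables are identified
as the local configuration dictates, as the following `LDLᵀ` decompositions show. -/

theorem cubicGamma2Form_two_triangles_nonneg (v₀ v₁ v₂ v₃ b₂ b₃ : ℝ) :
    0 ≤ cubicGamma2Form v₀ v₁ v₂ v₃ v₂ v₃ v₁ b₂ v₁ b₃ := by
  have h : cubicGamma2Form v₀ v₁ v₂ v₃ v₂ v₃ v₁ b₂ v₁ b₃ =
      9/2 * (v₀ - 1/3 * v₁ - 7/18 * v₂ - 7/18 * v₃ + 1/18 * b₂ + 1/18 * b₃) ^ 2 +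
      2 * (v₁ - 13/24 * v₂ - 13/24 * v₃ + 1/24 * b₂ + 1/24 * b₃) ^ 2 +
      283/288 * (v₂ - 221/283 * v₃ - 103/283 * b₂ + 41/283 * b₃) ^ 2 +
      217/566 * (v₃ - 5/14 * b₂ - 9/14 * b₃) ^ 2 +
      3/56 * (b₂ - b₃) ^ 2 := by
    unfold cubicGamma2Form; ring
  rw [h]; positivity

theorem cubicGamma2Form_triangle_square_nonneg (v₀ v₁ v₂ v₃ b₁ b₂ b₃ : ℝ) :
    0 ≤ cubicGamma2Form v₀ v₁ v₂ v₃ v₂ b₁ v₁ b₂ b₁ b₃ := by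
  have h : cubicGamma2Form v₀ v₁ v₂ v₃ v₂ b₁ v₁ b₂ b₁ b₃ =
      9/2 * (v₀ - 7/18 * v₁ - 7/18 * v₂ - 4/9 * v₃ + 1/9 * b₁ + 1/18 * b₂ + 1/18 * b₃) ^ 2 +
      113/72 * (v₁ - 85/113 * v₂ - 20/113 * v₃ - 22/113 * b₁ + 7/113 * b₂ + 7/113 * b₃) ^ 2 +
      77/113 * (v₂ - 5/7 * v₃ - 4/77 * b₁ - 149/308 * b₂ + 1/4 * b₃) ^ 2 +
      5/7 * (v₃ - 1/2 * b₁ - 3/20 * b₂ - 7/20 * b₃) ^ 2 +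
      9/44 * (b₁ - 7/18 * b₂ - 11/18 * b₃) ^ 2 +
      17/720 * (b₂ - b₃) ^ 2 := by
    unfold cubicGamma2Form; ring
  rw [h]; positivity

theorem cubicGamma2Form_two_squares_nonneg (v₀ v₁ v₂ v₃ a₁ b₁ b₂ b₃ : ℝ) :
    0 ≤ cubicGamma2Form v₀ v₁ v₂ v₃ a₁ b₁ a₁ b₂ b₁ b₃ := by
  have h : cubicGamma2Form v₀ v₁ v₂ v₃ a₁ b₁ a₁ b₂ b₁ b₃ =
      9/2 * (v₀ - 4/9 * v₁ - 4/9 * v₂ - 4/9 * v₃ + 1/9 * a₁ + 1/9 * b₁ + 1/18 * b₂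
        + 1/18 * b₃) ^ 2 +
      10/9 * (v₁ - 7/20 * v₂ - 7/20 * v₃ - 1/4 * a₁ - 1/4 * b₁ + 1/10 * b₂ + 1/10 * b₃) ^ 2 +
      39/40 * (v₂ - 7/13 * v₃ - 5/13 * a₁ + 5/39 * b₁ - 14/39 * b₂ + 2/13 * b₃) ^ 2 +
      9/13 * (v₃ - 1/9 * a₁ - 4/9 * b₁ - 1/18 * b₂ - 7/18 * b₃) ^ 2 +
      2/9 * (a₁ - 1/2 * b₁ - 5/8 * b₂ + 1/8 * b₃) ^ 2 +
      1/6 * (b₁ - 1/4 * b₂ - 3/4 * b₃) ^ 2 := by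
    unfold cubicGamma2Form; ring
  rw [h]; positivity

theorem cubicGamma2Form_common_neighbor_nonneg (v₀ v₁ v₂ v₃ a₁ b₁ b₂ b₃ : ℝ) :
    0 ≤ cubicGamma2Form v₀ v₁ v₂ v₃ a₁ b₁ a₁ b₂ a₁ b₃ := by
  have h : cubicGamma2Form v₀ v₁ v₂ v₃ a₁ b₁ a₁ b₂ a₁ b₃ =
      9/2 * (v₀ - 4/9 * v₁ - 4/9 * v₂ - 4/9 * v₃ + 1/6 * a₁ + 1/18 * b₁ + 1/18 * b₂
        + 1/18 * b₃) ^ 2 +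
      10/9 * (v₁ - 7/20 * v₂ - 7/20 * v₃ - 3/20 * a₁ - 7/20 * b₁ + 1/10 * b₂ + 1/10 * b₃) ^ 2 +
      39/40 * (v₂ - 7/13 * v₃ - 3/13 * a₁ - 1/39 * b₁ - 14/39 * b₂ + 2/13 * b₃) ^ 2 +
      9/13 * (v₃ - 1/2 * a₁ - 1/18 * b₁ - 1/18 * b₂ - 7/18 * b₃) ^ 2 +
      3/8 * (a₁ - 1/3 * b₁ - 1/3 * b₂ - 1/3 * b₃) ^ 2 +
      1/18 * (b₁ - 1/2 * b₂ - 1/2 * b₃) ^ 2 +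
      1/24 * (b₂ - b₃) ^ 2 := by
    unfold cubicGamma2Form; ring
  rw [h]; positivity

section BakryEmery

variable [DecidableEq V] {G : SimpleGraph V} [∀ v, Fintype (G.neighborSet v)]
  {x y y₁ y₂ y₃ a₁ b₁ a₂ b₂ a₃ b₃ : V}

theorem graphGamma2_eq_cubicGamma2Form (hG : G.IsRegularOfDegree 3)
    (hN : G.neighborFinset x = {y₁, y₂, y₃}) (hN₁ : G.neighborFinset y₁ = {x, a₁, b₁})
    (hN₂ : G.neighborFinset y₂ = {x, a₂, b₂}) (hN₃ : G.neighborFinset y₃ = {x, a₃, b₃})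
    (f : V → ℝ) :
    graphGamma2 G f f x = cubicGamma2Form (f x) (f y₁) (f y₂) (f y₃)
      (f a₁) (f b₁) (f a₂) (f b₂) (f a₃) (f b₃) := by
  obtain ⟨h₁₂, h₁₃, h₂₃⟩ := hG.ne_of_neighborFinset_eq hN
  obtain ⟨hxa₁, hxb₁, hab₁⟩ := hG.ne_of_neighborFinset_eq hN₁
  obtain ⟨hxa₂, hxb₂, hab₂⟩ := hG.ne_of_neighborFinset_eq hN₂
  obtain ⟨hxa₃, hxb₃, hab₃⟩ := hG.ne_of_neighborFinset_eq hN₃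
  simp only [graphGamma2, graphGamma, graphLap, hN, hN₁, hN₂, hN₃, sum_insert, mem_insert,
    mem_singleton, sum_singleton, h₁₂, h₁₃, h₂₃, hxa₁, hxb₁, hab₁, hxa₂, hxb₂, hab₂, hxa₃, hxb₃,
    hab₃, not_false_iff, or_self]
  unfold cubicGamma2Form
  ring

theorem graphGamma2_nonneg_of_two_triangles (hG : G.IsRegularOfDegree 3)
    (hN : G.neighborFinset x = {y₁, y₂, y₃}) (h₁₂ : G.Adj y₁ y₂) (h₁₃ : G.Adj y₁ y₃)
    (f : V → ℝ) : 0 ≤ graphGamma2 G f f x := by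
  obtain ⟨-, -, h₂₃⟩ := hG.ne_of_neighborFinset_eq hN
  obtain ⟨hx₁, hx₂, hx₃⟩ := adj_of_neighborFinset_eq_triple hN
  have hN₁ := hG.neighborFinset_eq hx₁.symm h₁₂ h₁₃ hx₂.ne hx₃.ne h₂₃
  obtain ⟨b₂, hN₂⟩ := hG.exists_neighborFinset_eq_of_adj_of_adj hx₂.symm h₁₂.symm hx₁.ne
  obtain ⟨b₃, hN₃⟩ := hG.exists_neighborFinset_eq_of_adj_of_adj hx₃.symm h₁₃.symm hx₁.ne
  rw [graphGamma2_eq_cubicGamma2Form hG hN hN₁ hN₂ hN₃]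
  exact cubicGamma2Form_two_triangles_nonneg ..

theorem graphGamma2_nonneg_of_triangle_of_square {z : V} (hG : G.IsRegularOfDegree 3)
    (hN : G.neighborFinset x = {y₁, y₂, y₃}) (h₁₂ : G.Adj y₁ y₂) (hzx : z ≠ x)
    (h₁z : G.Adj y₁ z) (h₃z : G.Adj y₃ z) (f : V → ℝ) : 0 ≤ graphGamma2 G f f x := by
  by_cases hz₂ : z = y₂
  · subst hz₂
    exact graphGamma2_nonneg_of_two_triangles hG (hN.trans (insert_comm _ _ _)) h₁₂.symm
      h₃z.symm f
  obtain ⟨hx₁, hx₂, hx₃⟩ := adj_of_neighborFinset_eq_triple hN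
  have hN₁ := hG.neighborFinset_eq hx₁.symm h₁₂ h₁z hx₂.ne hzx.symm (Ne.symm hz₂)
  obtain ⟨b₂, hN₂⟩ := hG.exists_neighborFinset_eq_of_adj_of_adj hx₂.symm h₁₂.symm hx₁.ne
  obtain ⟨b₃, hN₃⟩ := hG.exists_neighborFinset_eq_of_adj_of_adj hx₃.symm h₃z hzx.symm
  rw [graphGamma2_eq_cubicGamma2Form hG hN hN₁ hN₂ hN₃]
  exact cubicGamma2Form_triangle_square_nonneg ..

theorem graphGamma2_nonneg_of_two_squares {z w : V} (hG : G.IsRegularOfDegree 3)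
    (hN : G.neighborFinset x = {y₁, y₂, y₃}) (hzx : z ≠ x) (h₁z : G.Adj y₁ z)
    (h₂z : G.Adj y₂ z) (hwx : w ≠ x) (h₁w : G.Adj y₁ w) (h₃w : G.Adj y₃ w) (f : V → ℝ) :
    0 ≤ graphGamma2 G f f x := by
  obtain ⟨hx₁, hx₂, hx₃⟩ := adj_of_neighborFinset_eq_triple hN
  obtain ⟨b₂, hN₂⟩ := hG.exists_neighborFinset_eq_of_adj_of_adj hx₂.symm h₂z hzx.symm
  obtain ⟨b₃, hN₃⟩ := hG.exists_neighborFinset_eq_of_adj_of_adj hx₃.symm h₃w hwx.symm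
  by_cases hzw : z = w
  · subst hzw
    obtain ⟨b₁, hN₁⟩ := hG.exists_neighborFinset_eq_of_adj_of_adj hx₁.symm h₁z hzx.symm
    rw [graphGamma2_eq_cubicGamma2Form hG hN hN₁ hN₂ hN₃]
    exact cubicGamma2Form_common_neighbor_nonneg ..
  · have hN₁ := hG.neighborFinset_eq hx₁.symm h₁z h₁w hzx.symm hwx.symm hzw
    rw [graphGamma2_eq_cubicGamma2Form hG hN hN₁ hN₂ hN₃]
    exact cubicGamma2Form_two_squares_nonneg ..

theorem graphGamma2_nonneg_of_triangleOrSquareThrough (hG : G.IsRegularOfDegree 3)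
    (hN : G.neighborFinset x = {y₁, y₂, y₃}) (h₁₂ : TriangleOrSquareThrough G x y₁ y₂)
    (h₁₃ : TriangleOrSquareThrough G x y₁ y₃) (f : V → ℝ) : 0 ≤ graphGamma2 G f f x := by
  rcases h₁₂ with h₁₂ | ⟨z, hzx, h₁z, h₂z⟩ <;> rcases h₁₃ with h₁₃ | ⟨w, hwx, h₁w, h₃w⟩
  · exact graphGamma2_nonneg_of_two_triangles hG hN h₁₂ h₁₃ f
  · exact graphGamma2_nonneg_of_triangle_of_square hG hN h₁₂ hwx h₁w h₃w f
  · exact graphGamma2_nonneg_of_triangle_of_square hG (hN.trans (by rw [pair_comm])) h₁₃ hzx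
      h₁z h₂z f
  · exact graphGamma2_nonneg_of_two_squares hG hN hzx h₁z h₂z hwx h₁w h₃w f

theorem graphGamma2_nonneg_of_forall_onTriangleOrSquare (hG : G.IsRegularOfDegree 3)
    (h : ∀ y, G.Adj x y → OnTriangleOrSquare G x y) (f : V → ℝ) : 0 ≤ graphGamma2 G f f x := by
  obtain ⟨y₁, y₂, y₃, -, -, -, hN⟩ := card_eq_three.1 (hG.card_neighborFinset x)
  have hN₂ : G.neighborFinset x = {y₂, y₁, y₃} := by rw [hN, insert_comm]
  have hN₃ : G.neighborFinset x = {y₃, y₁, y₂} := by rw [hN, pair_comm, insert_comm]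
  obtain ⟨hx₁, hx₂, hx₃⟩ := adj_of_neighborFinset_eq_triple hN
  -- every neighbour shares a triangle or square with another, so one shares with both others
  rcases (h y₁ hx₁).triangleOrSquareThrough hN with h₁₂ | h₁₃
  · rcases (h y₃ hx₃).triangleOrSquareThrough hN₃ with h₃₁ | h₃₂
    · exact graphGamma2_nonneg_of_triangleOrSquareThrough hG hN h₁₂ h₃₁.symm f
    · exact graphGamma2_nonneg_of_triangleOrSquareThrough hG hN₂ h₁₂.symm h₃₂.symm f
  · rcases (h y₂ hx₂).triangleOrSquareThrough hN₂ with h₂₁ | h₂₃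
    · exact graphGamma2_nonneg_of_triangleOrSquareThrough hG hN h₂₁.symm h₁₃ f
    · exact graphGamma2_nonneg_of_triangleOrSquareThrough hG hN₃ h₁₃.symm h₂₃.symm f

theorem exists_graphGamma2_neg_of_not_onTriangleOrSquare (hG : G.IsRegularOfDegree 3)
    (hxy : G.Adj x y) (h : ¬ OnTriangleOrSquare G x y) :
    ∃ f : V → ℝ, graphGamma2 G f f x < 0 := by
  classical
  obtain ⟨y₂, y₃, hN⟩ := hG.exists_neighborFinset_eq_of_adj hxy
  obtain ⟨a, b, hNy⟩ := hG.exists_neighborFinset_eq_of_adj hxy.symm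
  obtain ⟨-, hx₂, hx₃⟩ := adj_of_neighborFinset_eq_triple hN
  obtain ⟨a₂, b₂, hN₂⟩ := hG.exists_neighborFinset_eq_of_adj hx₂.symm
  obtain ⟨a₃, b₃, hN₃⟩ := hG.exists_neighborFinset_eq_of_adj hx₃.symm
  obtain ⟨hyy₂, hyy₃, -⟩ := hG.ne_of_neighborFinset_eq hN
  obtain ⟨hxa, hxb, -⟩ := hG.ne_of_neighborFinset_eq hNy
  obtain ⟨hxa₂, hxb₂, -⟩ := hG.ne_of_neighborFinset_eq hN₂
  obtain ⟨hxa₃, hxb₃, -⟩ := hG.ne_of_neighborFinset_eq hN₃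
  obtain ⟨-, hya, hyb⟩ := adj_of_neighborFinset_eq_triple hNy
  obtain ⟨-, hy₂a₂, hy₂b₂⟩ := adj_of_neighborFinset_eq_triple hN₂
  obtain ⟨-, hy₃a₃, hy₃b₃⟩ := adj_of_neighborFinset_eq_triple hN₃
  let f : V → ℝ := fun v => if v = x then 0 else if v = y then -4 else if G.Adj y v then -6 else 2
  have hfar (w : V) (hxw : G.Adj x w) (hwy : w ≠ y) (u : V) (hux : u ≠ x)
      (hwu : w = u ∨ G.Adj w u) : f u = 2 := by
    have hyu : ¬ G.Adj y u := fun hyu => h ⟨w, u, hxw, hwy, hyu, hux, hwu⟩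
    have huy : u ≠ y := by
      rintro rfl
      exact h ⟨w, w, hxw, hwy, (hwu.resolve_left hwy).symm, hxw.ne.symm, Or.inl rfl⟩
    simp [f, hux, huy, hyu]
  refine ⟨f, ?_⟩
  rw [graphGamma2_eq_cubicGamma2Form hG hN hNy hN₂ hN₃,
    hfar y₂ hx₂ hyy₂.symm y₂ hx₂.ne.symm (Or.inl rfl),
    hfar y₃ hx₃ hyy₃.symm y₃ hx₃.ne.symm (Or.inl rfl),
    hfar y₂ hx₂ hyy₂.symm a₂ hxa₂.symm (Or.inr hy₂a₂),
    hfar y₂ hx₂ hyy₂.symm b₂ hxb₂.symm (Or.inr hy₂b₂),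
    hfar y₃ hx₃ hyy₃.symm a₃ hxa₃.symm (Or.inr hy₃a₃),
    hfar y₃ hx₃ hyy₃.symm b₃ hxb₃.symm (Or.inr hy₃b₃)]
  norm_num [f, hxy.ne.symm, hxa.symm, hxb.symm, hya, hyb, hya.ne.symm, hyb.ne.symm,
    cubicGamma2Form]

end BakryEmery

theorem satisfiesCD_iff {G : SimpleGraph V} [∀ v, Fintype (G.neighborSet v)] {x : V}
    (hG : G.IsRegularOfDegree 3) :
    SatisfiesCD G x ↔ ∀ y, G.Adj x y → OnTriangleOrSquare G x y := by
  classical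
  refine ⟨fun hCD y hxy => ?_, graphGamma2_nonneg_of_forall_onTriangleOrSquare hG⟩
  by_contra h
  obtain ⟨f, hf⟩ := exists_graphGamma2_neg_of_not_onTriangleOrSquare hG hxy h
  exact (hCD f).not_gt hf

/-- For a cubic (3-regular, locally finite simple) graph, every vertex
satisfies `CD(0,∞)` iff every edge has Ollivier–Ricci curvature `κ₀ ≥ 0`. -/
theorem cubic_CD_iff_ollivier_nonneg {V : Type*} (G : SimpleGraph V)
    [∀ v, Fintype (G.neighborSet v)] (hcubic : ∀ v : V, G.degree v = 3) :
    (∀ x : V, SatisfiesCD G x) ↔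
      (∀ x y : V, G.Adj x y → 0 ≤ kappaZero G x y) := by
  simp only [satisfiesCD_iff hcubic]
  exact forall₂_congr fun x y => forall_congr' fun hxy => (kappaZero_nonneg_iff hcubic hxy).symm
end

section
/- Let G be a 3-regular simple graph and let xy be an edge of G that lies on a 4-cycle but not on any triangle (i.e. the smallest cycle supporting the edge xy has length 4). Then κ₀(x,y) = 0. -/
/-!
No triangle on `xy` means that `x` and `y` have disjoint neighbourhoods, so every unit of mass
moved from `N(x)` to `N(y)` travels distance at least `1`, and `W₁(μ_x^0, μ_y^0) ≥ 1`.
Conversely, with the 4-cycle `x u v y` and the third neighbours `a` of `x` and `b` of `y`,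
the matching `u ↦ v`, `y ↦ b`, `a ↦ x` moves every unit of mass along an edge, so
`W₁(μ_x^0, μ_y^0) ≤ 1`.
-/

open Finset

variable {V : Type*}

namespace SimpleGraph

theorem one_le_dist_of_adj_of_adj {G : SimpleGraph V} {x y u v : V} (hxy : G.Adj x y)
    (hxu : G.Adj x u) (hyv : G.Adj y v) (huv : u ≠ v) : 1 ≤ G.dist u v :=
  (hxu.symm.reachable.trans (hxy.reachable.trans hyv.reachable)).pos_dist_of_ne huv

variable (G : SimpleGraph V) [∀ v, Fintype (G.neighborSet v)]

def IsCoupling (x y : V) (π : V → V → ℝ) : Prop :=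
  (∀ u v, 0 ≤ π u v) ∧
  (∀ u v, π u v ≠ 0 → G.Adj x u ∧ G.Adj y v) ∧
  (∀ u, ∑ v ∈ G.neighborFinset y, π u v = muZero G x u) ∧
  (∀ v, ∑ u ∈ G.neighborFinset x, π u v = muZero G y v)

noncomputable def transportCost (x y : V) (π : V → V → ℝ) : ℝ :=
  ∑ u ∈ G.neighborFinset x, ∑ v ∈ G.neighborFinset y, (G.dist u v : ℝ) * π u v

variable {G}

theorem Wone_eq_sInf (x y : V) :
    Wone G x y = sInf {w | ∃ π, G.IsCoupling x y π ∧ w = G.transportCost x y π} := by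
  simp only [Wone, IsCoupling, transportCost, and_assoc]

theorem IsCoupling.transportCost_nonneg {x y : V} {π : V → V → ℝ}
    (hπ : G.IsCoupling x y π) :
    0 ≤ G.transportCost x y π :=
  sum_nonneg fun _ _ => sum_nonneg fun _ _ => mul_nonneg (Nat.cast_nonneg _) (hπ.1 _ _)

theorem Wone_le_transportCost {x y : V} {π : V → V → ℝ} (hπ : G.IsCoupling x y π) :
    Wone G x y ≤ G.transportCost x y π := by
  rw [Wone_eq_sInf]
  refine csInf_le ⟨0, ?_⟩ ⟨π, hπ, rfl⟩
  rintro _ ⟨π', hπ', rfl⟩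
  exact hπ'.transportCost_nonneg

theorem le_Wone {x y : V} {c : ℝ} (hne : ∃ π, G.IsCoupling x y π)
    (h : ∀ π, G.IsCoupling x y π → c ≤ G.transportCost x y π) : c ≤ Wone G x y := by
  obtain ⟨π, hπ⟩ := hne
  rw [Wone_eq_sInf]
  refine le_csInf ⟨_, π, hπ, rfl⟩ ?_
  rintro _ ⟨π', hπ', rfl⟩
  exact h π' hπ'

theorem muZero_of_adj {x u : V} (h : G.Adj x u) : muZero G x u = 1 / G.degree x := by
  simp [muZero, h]

theorem sum_muZero {x : V} (hx : G.degree x ≠ 0) :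
    ∑ u ∈ G.neighborFinset x, muZero G x u = 1 := by
  rw [sum_congr rfl fun u hu => muZero_of_adj ((G.mem_neighborFinset x u).1 hu), sum_const,
    card_neighborFinset_eq_degree, nsmul_eq_mul, mul_one_div_cancel (Nat.cast_ne_zero.2 hx)]

/-- Without a common neighbour of `x` and `y`, no mass stays in place. -/
theorem IsCoupling.one_le_transportCost {x y : V} {π : V → V → ℝ} (hπ : G.IsCoupling x y π)
    (hxy : G.Adj x y) (htri : ∀ z : V, ¬(G.Adj x z ∧ G.Adj y z)) :
    1 ≤ G.transportCost x y π := by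
  obtain ⟨hnonneg, hsupp, hrow, -⟩ := hπ
  have hmass (u v : V) : π u v ≤ G.dist u v * π u v := by
    by_cases hπuv : π u v = 0
    · simp [hπuv]
    obtain ⟨hxu, hyv⟩ := hsupp u v hπuv
    have huv : u ≠ v := by rintro rfl; exact htri u ⟨hxu, hyv⟩
    have hdist : (1 : ℝ) ≤ G.dist u v := by
      exact_mod_cast one_le_dist_of_adj_of_adj hxy hxu hyv huv
    nlinarith [hnonneg u v]
  calc (1 : ℝ) = ∑ u ∈ G.neighborFinset x, muZero G x u :=
        (sum_muZero hxy.degree_pos_left.ne').symm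
    _ = ∑ u ∈ G.neighborFinset x, ∑ v ∈ G.neighborFinset y, π u v := by simp only [hrow]
    _ ≤ G.transportCost x y π := sum_le_sum fun u _ => sum_le_sum fun v _ => hmass u v

variable (G) in
open Classical in
noncomputable def matchingCoupling (x : V) (σ : V → V) (u v : V) : ℝ :=
  if G.Adj x u ∧ v = σ u then 1 / G.degree x else 0

theorem matchingCoupling_of_adj [DecidableEq V] {x u : V} (σ : V → V) (hxu : G.Adj x u) (v : V) :
    G.matchingCoupling x σ u v = if v = σ u then 1 / (G.degree x : ℝ) else 0 := by
  simp [matchingCoupling, hxu]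

theorem isCoupling_matchingCoupling [DecidableEq V] {x y : V} {σ : V → V}
    (himage : (G.neighborFinset x).image σ = G.neighborFinset y)
    (hdeg : G.degree x = G.degree y) : G.IsCoupling x y (G.matchingCoupling x σ) := by
  have hmaps {u : V} (hxu : G.Adj x u) : G.Adj y (σ u) := by
    rw [← mem_neighborFinset, ← himage]
    exact mem_image_of_mem σ ((G.mem_neighborFinset x u).2 hxu)
  have hinj : Set.InjOn σ (G.neighborFinset x) := by
    refine injOn_of_card_image_eq ?_
    rw [himage, card_neighborFinset_eq_degree, card_neighborFinset_eq_degree, hdeg]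
  refine ⟨fun u v => ?_, fun u v h => ?_, fun u => ?_, fun v => ?_⟩
  · unfold matchingCoupling
    split_ifs <;> positivity
  · unfold matchingCoupling at h
    split_ifs at h with huv
    · exact ⟨huv.1, huv.2 ▸ hmaps huv.1⟩
    · exact absurd rfl h
  · by_cases hxu : G.Adj x u
    · simp [matchingCoupling_of_adj σ hxu, muZero_of_adj hxu, hmaps hxu]
    · simp [matchingCoupling, muZero, hxu]
  · rw [sum_congr rfl fun u hu => matchingCoupling_of_adj σ ((G.mem_neighborFinset x u).1 hu) v]
    by_cases hyv : G.Adj y v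
    · obtain ⟨u₀, hu₀, rfl⟩ := mem_image.1 (himage ▸ (G.mem_neighborFinset y v).2 hyv)
      rw [sum_eq_single_of_mem u₀ hu₀
          fun u hu hne => if_neg fun h => hne (hinj hu hu₀ h.symm),
        if_pos rfl, muZero_of_adj hyv, hdeg]
    · rw [muZero, if_neg hyv]
      refine sum_eq_zero fun u hu => if_neg ?_
      rintro rfl
      exact hyv (hmaps ((G.mem_neighborFinset x u).1 hu))

theorem transportCost_matchingCoupling_le_one [DecidableEq V] {x y : V} {σ : V → V}
    (hmaps : ∀ u ∈ G.neighborFinset x, σ u ∈ G.neighborFinset y)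
    (hdist : ∀ u ∈ G.neighborFinset x, G.dist u (σ u) ≤ 1) :
    G.transportCost x y (G.matchingCoupling x σ) ≤ 1 := calc
  G.transportCost x y (G.matchingCoupling x σ)
      = ∑ u ∈ G.neighborFinset x, (G.dist u (σ u) : ℝ) * (1 / G.degree x) :=
    sum_congr rfl fun u hu => by
      simp only [matchingCoupling_of_adj σ ((G.mem_neighborFinset x u).1 hu), mul_ite, mul_zero,
        sum_ite_eq', hmaps u hu, if_true]
  _ ≤ ∑ u ∈ G.neighborFinset x, 1 * (1 / (G.degree x : ℝ)) := by
    gcongr with u hu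
    exact_mod_cast hdist u hu
  _ ≤ 1 := by
    rw [← mul_sum, sum_const, card_neighborFinset_eq_degree, one_mul, nsmul_eq_mul,
      mul_one_div]
    exact div_self_le_one _

theorem exists_neighborFinset_eq_of_degree_eq_three [DecidableEq V] {x p q : V}
    (hx : G.degree x = 3) (hp : G.Adj x p) (hq : G.Adj x q) (hpq : p ≠ q) :
    ∃ r, r ≠ p ∧ r ≠ q ∧ G.Adj x r ∧ G.neighborFinset x = {p, q, r} := by
  have hp' : p ∈ G.neighborFinset x := (G.mem_neighborFinset x p).2 hp
  have hq' : q ∈ (G.neighborFinset x).erase p :=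
    mem_erase.2 ⟨hpq.symm, (G.mem_neighborFinset x q).2 hq⟩
  obtain ⟨r, hr⟩ : ∃ r, ((G.neighborFinset x).erase p).erase q = {r} := by
    rw [← card_eq_one, card_erase_of_mem hq', card_erase_of_mem hp',
      card_neighborFinset_eq_degree, hx]
  have hr' : r ∈ ((G.neighborFinset x).erase p).erase q := hr ▸ mem_singleton_self r
  simp only [mem_erase, mem_neighborFinset] at hr'
  refine ⟨r, hr'.2.1, hr'.1, hr'.2.2, ?_⟩
  rw [← insert_erase hp', ← insert_erase hq', hr]

end SimpleGraph

open SimpleGraph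

/-- In a 3-regular simple graph, an edge lying on a 4-cycle but on no
triangle has Ollivier–Ricci curvature `κ₀(x,y) = 0`. -/
theorem ollivier_eq_zero_of_square_no_triangle {V : Type*} (G : SimpleGraph V)
    [∀ v, Fintype (G.neighborSet v)] (hcubic : ∀ v : V, G.degree v = 3)
    {x y : V} (hxy : G.Adj x y)
    (hsquare : ∃ u v : V, G.Adj x u ∧ G.Adj u v ∧ G.Adj v y ∧ u ≠ y ∧ v ≠ x)
    (htri : ∀ z : V, ¬(G.Adj x z ∧ G.Adj y z)) :
    kappaZero G x y = 0 := by
  classical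
  obtain ⟨u, v, hxu, huv, hvy, huy, hvx⟩ := hsquare
  obtain ⟨a, hay, hau, hxa, hNx⟩ :=
    exists_neighborFinset_eq_of_degree_eq_three (hcubic x) hxy hxu huy.symm
  obtain ⟨b, -, -, hyb, hNy⟩ :=
    exists_neighborFinset_eq_of_degree_eq_three (hcubic y) hxy.symm hvy.symm hvx.symm
  let σ : V → V := fun p => if p = u then v else if p = y then b else x
  have hσ : σ y = b ∧ σ u = v ∧ σ a = x := by simp [σ, huy.symm, hau, hay]
  have himage : (G.neighborFinset x).image σ = G.neighborFinset y := by
    rw [hNx, hNy, image_insert, image_insert, image_singleton, hσ.1, hσ.2.1, hσ.2.2]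
    ext
    simp only [mem_insert, mem_singleton]
    tauto
  have hdist : ∀ p ∈ G.neighborFinset x, G.dist p (σ p) ≤ 1 := by
    simp only [hNx, mem_insert, mem_singleton, forall_eq_or_imp, forall_eq, hσ,
      dist_eq_one_iff_adj.2 hyb, dist_eq_one_iff_adj.2 huv, dist_eq_one_iff_adj.2 hxa.symm,
      le_refl, and_self]
  have hπ := isCoupling_matchingCoupling himage ((hcubic x).trans (hcubic y).symm)
  have hW : Wone G x y = 1 := le_antisymm
    ((Wone_le_transportCost hπ).trans
      (transportCost_matchingCoupling_le_one (fun p hp => himage ▸ mem_image_of_mem σ hp) hdist))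
    (le_Wone ⟨_, hπ⟩ fun π h => h.one_le_transportCost hxy htri)
  rw [kappaZero, hW, sub_self]
end
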